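/- For a polynomial p of degree at most 2 on an interval E and a C^3 function v on E whose nodal interpolant Iv (a quintic polynomial agreeing with v and its first and second derivatives at both endpoints) is given, it holds that ∫_E p · (v - Iv)''' dt = 0; consequently (Iv)''' equals the L^2(E)-orthogonal projection of v''' onto P_2(E). -/

import Mathlib

/-!
Integrating by parts `n` times moves all `n` derivatives from `f` onto `p`: each step trades
`∫ p · f⁽ᵏ⁺¹⁾` for `-∫ p' · f⁽ᵏ⁾` because the boundary term `[p · f⁽ᵏ⁾]ₐᵇ` vanishes, and after
`n` steps the integrand contains `p⁽ⁿ⁾ = 0`. For the theorem, `f = v - q` vanishes to second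
order at both endpoints and `p''' = 0`.
-/

open Polynomial

theorem Polynomial.iteratedDeriv_eval {𝕜 : Type*} [NontriviallyNormedField 𝕜] (p : 𝕜[X])
    (k : ℕ) : iteratedDeriv k (fun x => p.eval x) = fun x => (derivative^[k] p).eval x := by
  induction k with
  | zero => simp
  | succ k ih =>
    ext x
    rw [iteratedDeriv_succ, ih, Polynomial.deriv, Function.iterate_succ_apply']

theorem integral_eval_mul_iteratedDeriv_eq_zero {n : ℕ} {f : ℝ → ℝ} (hf : ContDiff ℝ n f)
    {p : ℝ[X]} (hp : derivative^[n] p = 0) {a b : ℝ}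
    (ha : ∀ k < n, iteratedDeriv k f a = 0) (hb : ∀ k < n, iteratedDeriv k f b = 0) :
    ∫ t in a..b, p.eval t * iteratedDeriv n f t = 0 := by
  induction n generalizing p with
  | zero => simp [show p = 0 from hp]
  | succ n ih =>
    have hderiv : ∀ x, HasDerivAt (iteratedDeriv n f) (iteratedDeriv (n + 1) f x) x := fun x => by
      rw [iteratedDeriv_succ]
      exact (hf.differentiable_iteratedDeriv n (by exact_mod_cast n.lt_succ_self) x).hasDerivAt
    rw [intervalIntegral.integral_mul_deriv_eq_deriv_mul (fun x _ => p.hasDerivAt x)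
      (fun x _ => hderiv x) (p.derivative.continuous.intervalIntegrable a b)
      ((hf.continuous_iteratedDeriv (n + 1) le_rfl).intervalIntegrable a b),
      ha n n.lt_succ_self, hb n n.lt_succ_self,
      ih hf.of_succ (by rwa [← Function.iterate_succ_apply]) (fun k hk => ha k (by omega))
        (fun k hk => hb k (by omega))]
    simp

theorem interpolant_third_deriv_orthogonal_general
    (a b : ℝ) (v : ℝ → ℝ) (hv : ContDiff ℝ 3 v)
    (p q : Polynomial ℝ) (hp : p.degree ≤ 2)
    (h0a : q.eval a = v a) (h0b : q.eval b = v b)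
    (h1a : (Polynomial.derivative q).eval a = deriv v a)
    (h1b : (Polynomial.derivative q).eval b = deriv v b)
    (h2a : (Polynomial.derivative (Polynomial.derivative q)).eval a = deriv (deriv v) a)
    (h2b : (Polynomial.derivative (Polynomial.derivative q)).eval b = deriv (deriv v) b) :
    (∫ t in a..b, p.eval t * iteratedDeriv 3 (fun s => v s - q.eval s) t) = 0 := by
  have hq : ContDiff ℝ 3 (fun s => q.eval s) := q.contDiff_aeval 3
  have hp3 : derivative^[3] p = 0 :=
    iterate_derivative_eq_zero_of_degree_lt (hp.trans_lt (by norm_num))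
  have hvanish : ∀ x, q.eval x = v x → (derivative q).eval x = deriv v x →
      (derivative (derivative q)).eval x = deriv (deriv v) x →
      ∀ k < 3, iteratedDeriv k (fun s => v s - q.eval s) x = 0 := by
    intro x h0 h1 h2 k hk
    have hk3 : (k : WithTop ℕ∞) ≤ 3 := by exact_mod_cast hk.le
    rw [iteratedDeriv_fun_sub (hv.of_le hk3).contDiffAt (hq.of_le hk3).contDiffAt,
      q.iteratedDeriv_eval]
    interval_cases k <;> simp [iteratedDeriv_succ, h0, h1, h2]
  exact integral_eval_mul_iteratedDeriv_eq_zero (hv.sub hq) hp3 (hvanish a h0a h1a h2a)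
    (hvanish b h0b h1b h2b)

/-- For a polynomial `p` of degree at most 2 on `E = [a,b]` and a `C³` function `v` whose
quintic Hermite-type interpolant `q` agrees with `v`, `v'` and `v''` at both endpoints,
`∫_E p · (v - q)''' = 0`; i.e. `q'''` is the `L²(E)`-orthogonal projection of `v'''`
onto `P₂(E)`. -/
theorem interpolant_third_deriv_orthogonal
    (a b : ℝ) (hab : a < b) (v : ℝ → ℝ) (hv : ContDiff ℝ 3 v)
    (p q : Polynomial ℝ) (hp : p.degree ≤ 2) (hq : q.degree ≤ 5)
    (h0a : q.eval a = v a) (h0b : q.eval b = v b)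
    (h1a : (Polynomial.derivative q).eval a = deriv v a)
    (h1b : (Polynomial.derivative q).eval b = deriv v b)
    (h2a : (Polynomial.derivative (Polynomial.derivative q)).eval a = deriv (deriv v) a)
    (h2b : (Polynomial.derivative (Polynomial.derivative q)).eval b = deriv (deriv v) b) :
    (∫ t in a..b, p.eval t * iteratedDeriv 3 (fun s => v s - q.eval s) t) = 0 :=
  interpolant_third_deriv_orthogonal_general a b v hv p q hp h0a h0b h1a h1b h2a h2b
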